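/- Consider the directed network with vertex set {A, B, C, D, E, F}, all vertices boundary vertices, and edges, each of capacity 1: A → E, E → C, C → D, D → A, D → C, C → F, F → B, B → D, A → F, F → A. This network is balanced, and its cycle-flow entropies satisfy S({B,C}) = 3, S({A,B,C,D}) = 3, S({A,B,C}) = 3, and S({B,C,D}) = 2; in particular strong subadditivity fails: S({A,B,C}) + S({B,C,D}) < S({B,C}) + S({A,B,C,D}). Hence this balanced network does not satisfy the nesting property. -/

import Mathlib

open scoped Classical

/-- An edge cycle: a nonempty cyclically ordered sequence of distinct directed
edges (each a source-target pair) with the target of each edge equal to the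
source of the next (cyclically). -/
structure EdgeCycle (V : Type*) where
  n : ℕ
  npos : 0 < n
  edge : Fin n → V × V
  inj : Function.Injective edge
  chain : ∀ i : Fin n, (edge i).2 = (edge ⟨(i.val + 1) % n, Nat.mod_lt _ npos⟩).1

/-- Membership of a directed edge in an edge cycle. -/
def EdgeCycle.Mem {V : Type*} (C : EdgeCycle V) (e : V × V) : Prop :=
  ∃ i, C.edge i = e

/-- The cycle visits a vertex of `S`: some edge of the cycle has its target in `S`. -/
def EdgeCycle.Visits {V : Type*} (C : EdgeCycle V) (S : Finset V) : Prop :=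
  ∃ i, (C.edge i).2 ∈ S

/-- A simple cycle flow: an edge cycle together with a nonnegative flux. -/
structure CycleFlow (V : Type*) where
  cyc : EdgeCycle V
  flux : ℝ
  flux_nonneg : 0 ≤ flux

/-- The total load that a finite family of simple cycle flows places on the
directed edge `(u, v)`. -/
noncomputable def edgeLoad {V : Type*} (F : List (CycleFlow V)) (u v : V) : ℝ :=
  (F.map (fun C => if C.cyc.Mem (u, v) then C.flux else 0)).sum

/-- A finite family of simple cycle flows is a multi-cycle flow on the network
with capacity function `c` if on every edge the total load is at most the capacity. -/
def Feasible {V : Type*} (c : V → V → ℝ) (F : List (CycleFlow V)) : Prop :=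
  ∀ u v, edgeLoad F u v ≤ c u v

/-- The flux of a multi-cycle flow between two (disjoint) vertex sets `I` and `J`:
the sum of the fluxes of those simple cycle flows visiting both a vertex of `I`
and a vertex of `J`. -/
noncomputable def mflux {V : Type*} (F : List (CycleFlow V)) (I J : Finset V) : ℝ :=
  (F.map (fun C => if C.cyc.Visits I ∧ C.cyc.Visits J then C.flux else 0)).sum

/-- The cycle-flow entropy of a subset `I` of the boundary vertices `bdry`:
the maximal flux between `I` and its boundary complement over all
multi-cycle flows. -/
noncomputable def entropy {V : Type*} (c : V → V → ℝ) (bdry I : Finset V) : ℝ :=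
  sSup { x | ∃ F : List (CycleFlow V), Feasible c F ∧ mflux F I (bdry \ I) = x }

/-- A network is balanced if at every vertex the total capacity of ingoing edges
equals the total capacity of outgoing edges. -/
def BalancedNet {V : Type*} [Fintype V] (c : V → V → ℝ) : Prop :=
  ∀ v : V, (∑ u, c u v) = ∑ u, c v u

/-- The residual capacity function of a network `c` with respect to a
multi-cycle flow `F`. -/
noncomputable def resid {V : Type*} (c : V → V → ℝ) (F : List (CycleFlow V)) : V → V → ℝ :=
  fun u v => c u v - edgeLoad F u v

/-- `F'` is a multi-cycle subflow of `F`: same edge cycles, smaller fluxes. -/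
def Subflow {V : Type*} (F' F : List (CycleFlow V)) : Prop :=
  List.Forall₂ (fun C' C => C'.cyc = C.cyc ∧ C'.flux ≤ C.flux) F' F

/-- The nesting property: for every pair of disjoint boundary subsets `I`, `J`
there is a single multi-cycle flow simultaneously maximizing the flux through
`I` and through `I ∪ J`. -/
def Nesting {V : Type*} (c : V → V → ℝ) (bdry : Finset V) : Prop :=
  ∀ I J : Finset V, I ⊆ bdry → J ⊆ bdry → Disjoint I J →
    ∃ F : List (CycleFlow V), Feasible c F ∧
      mflux F I (bdry \ I) = entropy c bdry I ∧
      mflux F (I ∪ J) (bdry \ (I ∪ J)) = entropy c bdry (I ∪ J)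

/-- The balanced network of Figure 4: vertices `A = 0, B = 1, C = 2, D = 3,
E = 4, F = 5`, all boundary vertices, and edges of capacity `1`:
`A → E, E → C, C → D, D → A, D → C, C → F, F → B, B → D, A → F, F → A`. -/
noncomputable def cap15 : Fin 6 → Fin 6 → ℝ := fun u v =>
  if (u, v) ∈ ([(0, 4), (4, 2), (2, 3), (3, 0), (3, 2), (2, 5), (5, 1), (1, 3),
      (0, 5), (5, 0)] : List (Fin 6 × Fin 6)) then 1 else 0


/-!
Each entropy is pinned down by three edge-disjoint unit cycles on one side and a bound valid
for every multi-cycle flow on the other: for `{B, C}`, `{A, B, C, D}` and `{B, C, D}` a cycle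
crossing the set leaves it, so the capacity of the outgoing cut bounds the flux; for
`{A, B, C}` this cut is too large and one uses instead three edges meeting every cycle.

Nesting implies strong subadditivity: for `I = X ∩ Y`, `J = (X ∪ Y) \ (X ∩ Y)` it yields one
flow realising `S(X ∩ Y)` and `S(X ∪ Y)`, and cycle by cycle the flux through `X ∩ Y` and
`X ∪ Y` is dominated by the flux through `X` and `Y`.
-/

lemma Fin.mk_add_one_mod {n : ℕ} [NeZero n] (i : Fin n) (h : (i.val + 1) % n < n) :
    (⟨(i.val + 1) % n, h⟩ : Fin n) = i + 1 := by
  ext; simp [Fin.val_add]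

open Fin.NatCast in
lemma Fin.forall_of_add_one_closed {n : ℕ} [NeZero n] {p : Fin n → Prop}
    (h : ∀ i, p i → p (i + 1)) {i : Fin n} (hi : p i) (j : Fin n) : p j := by
  have key : ∀ k : ℕ, p (i + (k : Fin n)) := by
    intro k
    induction k with
    | zero => simpa using hi
    | succ k ih => simpa [Nat.cast_succ, add_assoc] using h _ ih
  simpa [Fin.cast_val_eq_self] using key (j - i).val

namespace EdgeCycle

variable {V : Type*}

instance (C : EdgeCycle V) : NeZero C.n := ⟨C.npos.ne'⟩

def ofVertices {n : ℕ} [NeZero n] (v : Fin n → V)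
    (hv : Function.Injective fun i => (v i, v (i + 1))) : EdgeCycle V where
  n := n
  npos := Nat.pos_of_neZero n
  edge i := (v i, v (i + 1))
  inj := hv
  chain i := by rw [Fin.mk_add_one_mod]

lemma mem_edge (C : EdgeCycle V) (i : Fin C.n) : C.Mem (C.edge i) := ⟨i, rfl⟩

lemma target_eq_source_add_one (C : EdgeCycle V) (i : Fin C.n) :
    (C.edge i).2 = (C.edge (i + 1)).1 := by
  rw [C.chain i, Fin.mk_add_one_mod]

lemma Visits.mono {C : EdgeCycle V} {S T : Finset V} (h : C.Visits S) (hST : S ⊆ T) :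
    C.Visits T :=
  let ⟨i, hi⟩ := h; ⟨i, hST hi⟩

lemma visits_union [DecidableEq V] {C : EdgeCycle V} {S T : Finset V} :
    C.Visits (S ∪ T) ↔ C.Visits S ∨ C.Visits T := by
  simp only [Visits, Finset.mem_union, exists_or]

lemma exists_mem_source_mem_target_not_mem (C : EdgeCycle V) {I J : Finset V}
    (hI : C.Visits I) (hJ : C.Visits J) (hIJ : Disjoint I J) :
    ∃ e, C.Mem e ∧ e.1 ∈ I ∧ e.2 ∉ I := by
  by_contra! h
  obtain ⟨i, hi⟩ := hI
  obtain ⟨j, hj⟩ := hJ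
  refine Finset.disjoint_left.mp hIJ
    (Fin.forall_of_add_one_closed (p := fun k => (C.edge k).2 ∈ I) (fun k hk => ?_) hi j) hj
  exact h _ (C.mem_edge _) (C.target_eq_source_add_one k ▸ hk)

lemma exists_mem_target_le_source {α : Type*} [LinearOrder α] (C : EdgeCycle V) (r : V → α) :
    ∃ e, C.Mem e ∧ r e.2 ≤ r e.1 := by
  obtain ⟨i, -, hi⟩ := Finset.univ.exists_max_image (fun i => r (C.edge i).2)
    Finset.univ_nonempty
  exact ⟨C.edge (i + 1), C.mem_edge _,
    C.target_eq_source_add_one i ▸ hi _ (Finset.mem_univ _)⟩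

end EdgeCycle

section Flows

variable {V : Type*}

lemma mflux_le_sum_edgeLoad {F : List (CycleFlow V)} {I J : Finset V} (Y : Finset (V × V))
    (hY : ∀ C : EdgeCycle V, C.Visits I → C.Visits J → ∃ e ∈ Y, C.Mem e) :
    mflux F I J ≤ ∑ e ∈ Y, edgeLoad F e.1 e.2 := by
  induction F with
  | nil => simp [mflux, edgeLoad]
  | cons C F ih =>
    simp only [mflux, edgeLoad, List.map_cons, List.sum_cons, Finset.sum_add_distrib,
      Prod.mk.eta] at ih ⊢
    refine add_le_add ?_ ih
    have hnonneg : ∀ e ∈ Y, 0 ≤ if C.cyc.Mem e then C.flux else 0 := fun e _ => by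
      split_ifs <;> simp [C.flux_nonneg]
    split_ifs with h
    · obtain ⟨e, heY, he⟩ := hY C.cyc h.1 h.2
      calc C.flux = if C.cyc.Mem e then C.flux else 0 := (if_pos he).symm
        _ ≤ _ := Finset.single_le_sum hnonneg heY
    · exact Finset.sum_nonneg hnonneg

lemma mflux_le_sum_cap {c : V → V → ℝ} {F : List (CycleFlow V)} (hF : Feasible c F)
    {I J : Finset V} (Y : Finset (V × V))
    (hY : ∀ C : EdgeCycle V, C.Visits I → C.Visits J → ∃ e ∈ Y, C.Mem e) :
    mflux F I J ≤ ∑ e ∈ Y, c e.1 e.2 :=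
  (mflux_le_sum_edgeLoad Y hY).trans (Finset.sum_le_sum fun e _ => hF e.1 e.2)

lemma mflux_le_sum_cap_cut [Fintype V] [DecidableEq V] {c : V → V → ℝ}
    {F : List (CycleFlow V)} (hF : Feasible c F) {I J : Finset V} (hIJ : Disjoint I J) :
    mflux F I J ≤ ∑ e ∈ I ×ˢ Iᶜ, c e.1 e.2 :=
  mflux_le_sum_cap hF _ fun C hI hJ =>
    let ⟨e, he, h1, h2⟩ := C.exists_mem_source_mem_target_not_mem hI hJ hIJ
    ⟨e, Finset.mem_product.mpr ⟨h1, Finset.mem_compl.mpr h2⟩, he⟩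

lemma mflux_le_sum_cap_of_potential [Fintype V] {α : Type*} [LinearOrder α]
    {c : V → V → ℝ} {F : List (CycleFlow V)} (hF : Feasible c F) (I J : Finset V)
    (r : V → α) :
    mflux F I J ≤ ∑ e ∈ Finset.univ.filter (fun e : V × V => r e.2 ≤ r e.1), c e.1 e.2 :=
  mflux_le_sum_cap hF _ fun C _ _ =>
    let ⟨e, he, hr⟩ := C.exists_mem_target_le_source r
    ⟨e, Finset.mem_filter.mpr ⟨Finset.mem_univ _, hr⟩, he⟩

end Flows

section Entropy

variable {V : Type*}

lemma entropy_eq_of_forall_le [DecidableEq V] {c : V → V → ℝ} {bdry I : Finset V} {k : ℝ}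
    {F : List (CycleFlow V)} (hF : Feasible c F) (hFk : mflux F I (bdry \ I) = k)
    (hle : ∀ F', Feasible c F' → mflux F' I (bdry \ I) ≤ k) :
    entropy c bdry I = k := by
  -- `entropy` and `Nesting` are elaborated with classical decidable equality.
  obtain rfl : ‹DecidableEq V› = fun a b => Classical.propDecidable (a = b) :=
    Subsingleton.elim _ _
  exact IsGreatest.csSup_eq ⟨⟨F, hF, hFk⟩, fun _ ⟨F', hF', hF'x⟩ => hF'x ▸ hle F' hF'⟩

lemma mflux_le_entropy [Fintype V] [DecidableEq V] {c : V → V → ℝ} {F : List (CycleFlow V)}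
    (hF : Feasible c F) (bdry I : Finset V) : mflux F I (bdry \ I) ≤ entropy c bdry I := by
  obtain rfl : ‹DecidableEq V› = fun a b => Classical.propDecidable (a = b) :=
    Subsingleton.elim _ _
  refine le_csSup ⟨∑ e : V × V, c e.1 e.2, ?_⟩ ⟨F, hF, rfl⟩
  rintro _ ⟨F', hF', rfl⟩
  exact mflux_le_sum_cap hF' _ fun C _ _ => ⟨C.edge 0, Finset.mem_univ _, C.mem_edge 0⟩

lemma ite_add_ite_le_ite_add_ite {p q x y : Prop} [Decidable p] [Decidable q] [Decidable x]
    [Decidable y] {a : ℝ} (ha : 0 ≤ a) (hp : p → x ∨ y) (hq : q → x ∨ y)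
    (hpq : p → q → x ∧ y) :
    (if p then a else 0) + (if q then a else 0) ≤
      (if x then a else 0) + (if y then a else 0) := by
  by_cases x <;> by_cases y <;> by_cases p <;> by_cases q <;> simp_all

/-- A cycle crossing `X ∩ Y` or `X ∪ Y` crosses `X` or `Y`; one crossing both crosses both. -/
lemma mflux_inter_add_mflux_union_le [DecidableEq V] (F : List (CycleFlow V))
    (bdry X Y : Finset V) :
    mflux F (X ∩ Y) (bdry \ (X ∩ Y)) + mflux F (X ∪ Y) (bdry \ (X ∪ Y)) ≤
      mflux F X (bdry \ X) + mflux F Y (bdry \ Y) := by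
  induction F with
  | nil => simp [mflux]
  | cons C F ih =>
    simp only [mflux, List.map_cons, List.sum_cons] at ih ⊢
    have hX := fun h : C.cyc.Visits (X ∩ Y) => h.mono Finset.inter_subset_left
    have hY := fun h : C.cyc.Visits (X ∩ Y) => h.mono Finset.inter_subset_right
    have hXc := fun h : C.cyc.Visits (bdry \ (X ∪ Y)) =>
      h.mono (sdiff_le_sdiff_left Finset.subset_union_left)
    have hYc := fun h : C.cyc.Visits (bdry \ (X ∪ Y)) =>
      h.mono (sdiff_le_sdiff_left Finset.subset_union_right)
    have hInterc : C.cyc.Visits (bdry \ (X ∩ Y)) →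
        C.cyc.Visits (bdry \ X) ∨ C.cyc.Visits (bdry \ Y) := by
      rw [Finset.sdiff_inter_distrib_right]; exact EdgeCycle.visits_union.mp
    have hUnion : C.cyc.Visits (X ∪ Y) → C.cyc.Visits X ∨ C.cyc.Visits Y :=
      EdgeCycle.visits_union.mp
    exact (add_add_add_comm _ _ _ _).trans_le <| (add_le_add (ite_add_ite_le_ite_add_ite
      C.flux_nonneg (by tauto) (by tauto) (by tauto)) ih).trans_eq (add_add_add_comm _ _ _ _)

theorem Nesting.entropy_inter_add_entropy_union_le [Fintype V] [DecidableEq V]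
    {c : V → V → ℝ} {bdry X Y : Finset V} (hN : Nesting c bdry) (hX : X ⊆ bdry)
    (hY : Y ⊆ bdry) :
    entropy c bdry (X ∩ Y) + entropy c bdry (X ∪ Y) ≤
      entropy c bdry X + entropy c bdry Y := by
  obtain rfl : ‹DecidableEq V› = fun a b => Classical.propDecidable (a = b) :=
    Subsingleton.elim _ _
  obtain ⟨F, hF, hInter, hUnion⟩ := hN (X ∩ Y) ((X ∪ Y) \ (X ∩ Y))
    (Finset.inter_subset_left.trans hX) (Finset.sdiff_subset.trans (Finset.union_subset hX hY))
    Finset.disjoint_sdiff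
  rw [Finset.union_sdiff_of_subset Finset.inter_subset_union] at hUnion
  rw [← hInter, ← hUnion]
  exact (mflux_inter_add_mflux_union_le F bdry X Y).trans
    (add_le_add (mflux_le_entropy hF bdry X) (mflux_le_entropy hF bdry Y))

end Entropy

section UnitFlows

variable {V : Type*}

/- Introduced only now: the lemmas above must match the classical `if`s inside `edgeLoad` and
`mflux`. -/
instance EdgeCycle.decidableMem [DecidableEq V] (C : EdgeCycle V) (e : V × V) :
    Decidable (C.Mem e) :=
  inferInstanceAs (Decidable (∃ i, C.edge i = e))

instance EdgeCycle.decidableVisits [DecidableEq V] (C : EdgeCycle V) (S : Finset V) :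
    Decidable (C.Visits S) :=
  inferInstanceAs (Decidable (∃ i, (C.edge i).2 ∈ S))

def CycleFlow.unit (C : EdgeCycle V) : CycleFlow V := ⟨C, 1, zero_le_one⟩

lemma edgeLoad_map_unit [DecidableEq V] (L : List (EdgeCycle V)) (u v : V) :
    edgeLoad (L.map CycleFlow.unit) u v = L.countP fun C => C.Mem (u, v) := by
  induction L with
  | nil => simp [edgeLoad]
  | cons C L ih =>
    simp only [edgeLoad, List.map_cons, List.sum_cons, List.countP_cons] at ih ⊢
    rw [ih]
    by_cases h : C.Mem (u, v) <;> simp [h, CycleFlow.unit, add_comm]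

lemma mflux_map_unit [DecidableEq V] (L : List (EdgeCycle V)) (I J : Finset V) :
    mflux (L.map CycleFlow.unit) I J = L.countP fun C => C.Visits I ∧ C.Visits J := by
  induction L with
  | nil => simp [mflux]
  | cons C L ih =>
    simp only [mflux, List.map_cons, List.sum_cons, List.countP_cons] at ih ⊢
    rw [ih]
    by_cases h : C.Visits I ∧ C.Visits J <;> simp [h, CycleFlow.unit, add_comm]

end UnitFlows

section Figure4

open Finset EdgeCycle

def edges15 : List (Fin 6 × Fin 6) :=
  [(0, 4), (4, 2), (2, 3), (3, 0), (3, 2), (2, 5), (5, 1), (1, 3), (0, 5), (5, 0)]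

lemma cap15_eq (u v : Fin 6) : cap15 u v = ((if (u, v) ∈ edges15 then 1 else 0 : ℕ) : ℝ) := by
  change (if (u, v) ∈ edges15 then (1 : ℝ) else 0) = _
  split_ifs <;> simp

lemma sum_cap15 (Y : Finset (Fin 6 × Fin 6)) :
    ∑ e ∈ Y, cap15 e.1 e.2 = #{e ∈ Y | e ∈ edges15} := by
  simp only [cap15_eq, Nat.cast_ite, Nat.cast_one, Nat.cast_zero, Prod.mk.eta]
  exact Finset.sum_boole _ _

lemma balancedNet_cap15 : BalancedNet cap15 := by
  intro v
  simp only [cap15_eq, Nat.cast_ite, Nat.cast_one, Nat.cast_zero, Finset.sum_boole, Nat.cast_inj]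
  revert v
  decide

lemma feasible_cap15 {L : List (EdgeCycle (Fin 6))}
    (hL : ∀ u v, L.countP (fun C => C.Mem (u, v)) ≤ if (u, v) ∈ edges15 then 1 else 0) :
    Feasible cap15 (L.map CycleFlow.unit) := fun u v => by
  rw [edgeLoad_map_unit, cap15_eq]
  exact_mod_cast hL u v

/-- `A → E → C → D → A`, `D → C → F → B → D`, `A → F → A`. -/
def cyclesAECD_DCFB_AF : List (EdgeCycle (Fin 6)) :=
  [ofVertices ![0, 4, 2, 3] (by decide), ofVertices ![3, 2, 5, 1] (by decide),
    ofVertices ![0, 5] (by decide)]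

/-- `A → E → C → F → A`, `C → D → C`, `A → F → B → D → A`. -/
def cyclesAECF_CD_AFBD : List (EdgeCycle (Fin 6)) :=
  [ofVertices ![0, 4, 2, 5] (by decide), ofVertices ![2, 3] (by decide),
    ofVertices ![0, 5, 1, 3] (by decide)]

lemma entropy_cap15_BC : entropy cap15 univ ({1, 2} : Finset (Fin 6)) = 3 := by
  refine entropy_eq_of_forall_le (feasible_cap15 (L := cyclesAECF_CD_AFBD) (by decide)) ?_
    fun F hF => (mflux_le_sum_cap_cut hF disjoint_sdiff).trans_eq ?_
  · rw [mflux_map_unit]; norm_cast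
  · rw [sum_cap15]; norm_cast

lemma entropy_cap15_ABCD : entropy cap15 univ ({0, 1, 2, 3} : Finset (Fin 6)) = 3 := by
  refine entropy_eq_of_forall_le (feasible_cap15 (L := cyclesAECD_DCFB_AF) (by decide)) ?_
    fun F hF => (mflux_le_sum_cap_cut hF disjoint_sdiff).trans_eq ?_
  · rw [mflux_map_unit]; norm_cast
  · rw [sum_cap15]; norm_cast

lemma entropy_cap15_BCD : entropy cap15 univ ({1, 2, 3} : Finset (Fin 6)) = 2 := by
  refine entropy_eq_of_forall_le (feasible_cap15 (L := cyclesAECD_DCFB_AF) (by decide)) ?_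
    fun F hF => (mflux_le_sum_cap_cut hF disjoint_sdiff).trans_eq ?_
  · rw [mflux_map_unit]; norm_cast
  · rw [sum_cap15]; norm_cast

/-- The cut out of `{A, B, C}` has capacity 5, but every cycle meets one of the three edges
`C → D`, `C → F`, `A → F` decreasing the potential `A B C D E F ↦ 3 1 5 2 4 0`. -/
lemma entropy_cap15_ABC : entropy cap15 univ ({0, 1, 2} : Finset (Fin 6)) = 3 := by
  refine entropy_eq_of_forall_le (feasible_cap15 (L := cyclesAECD_DCFB_AF) (by decide)) ?_
    fun F hF => (mflux_le_sum_cap_of_potential hF _ _ ![3, 1, 5, 2, 4, 0]).trans_eq ?_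
  · rw [mflux_map_unit]; norm_cast
  · rw [sum_cap15]; norm_cast

lemma entropy_cap15_ABC_add_BCD_lt :
    entropy cap15 univ ({0, 1, 2} : Finset (Fin 6)) + entropy cap15 univ {1, 2, 3} <
      entropy cap15 univ {1, 2} + entropy cap15 univ {0, 1, 2, 3} := by
  rw [entropy_cap15_ABC, entropy_cap15_BCD, entropy_cap15_BC, entropy_cap15_ABCD]
  norm_num

end Figure4

/-- This network is balanced, its entropies satisfy `S(BC) = 3, S(ABCD) = 3,
S(ABC) = 3, S(BCD) = 2`, strong subadditivity fails, and hence the network does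
not satisfy the nesting property. -/
theorem stmt15 :
    BalancedNet cap15 ∧
    entropy cap15 Finset.univ ({1, 2} : Finset (Fin 6)) = 3 ∧
    entropy cap15 Finset.univ ({0, 1, 2, 3} : Finset (Fin 6)) = 3 ∧
    entropy cap15 Finset.univ ({0, 1, 2} : Finset (Fin 6)) = 3 ∧
    entropy cap15 Finset.univ ({1, 2, 3} : Finset (Fin 6)) = 2 ∧
    entropy cap15 Finset.univ ({0, 1, 2} : Finset (Fin 6)) +
        entropy cap15 Finset.univ ({1, 2, 3} : Finset (Fin 6)) <
      entropy cap15 Finset.univ ({1, 2} : Finset (Fin 6)) +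
        entropy cap15 Finset.univ ({0, 1, 2, 3} : Finset (Fin 6)) ∧
    ¬ Nesting cap15 Finset.univ := by
  refine ⟨balancedNet_cap15, entropy_cap15_BC, entropy_cap15_ABCD, entropy_cap15_ABC,
    entropy_cap15_BCD, entropy_cap15_ABC_add_BCD_lt, fun hN => ?_⟩
  have hSSA := hN.entropy_inter_add_entropy_union_le (X := {0, 1, 2}) (Y := {1, 2, 3})
    (Finset.subset_univ _) (Finset.subset_univ _)
  rw [show ({0, 1, 2} ∩ {1, 2, 3} : Finset (Fin 6)) = {1, 2} by decide,
    show ({0, 1, 2} ∪ {1, 2, 3} : Finset (Fin 6)) = {0, 1, 2, 3} by decide] at hSSA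
  exact hSSA.not_gt entropy_cap15_ABC_add_BCD_lt
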